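/- Let (γ, ℓ, ℓ⁽²⁾, Y) be coordinate hypersurface data on U with inverse blocks (P, n, n⁽²⁾) and derived fields Γ̄^c_{ab}, K_{ab}, φ_a, Ψ^b_a. Then the following equations hold on U: ∇̄_aP^{bc} + n^bΨ^c_a + n^cΨ^b_a = 0; ∇̄_an^b + φ_a n^b − P^{bc}K_{ac} + n⁽²⁾Ψ^b_a = 0; −½∂_a n⁽²⁾ − n⁽²⁾φ_a + K_{ab}n^b = 0. -/

import Mathlib

open scoped BigOperators

noncomputable section

namespace HypData

variable {m : ℕ}

/-- Scalar field on ℝ^m. -/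
abbrev Sc (m : ℕ) := (Fin m → ℝ) → ℝ
/-- One-index field. -/
abbrev Vec (m : ℕ) := (Fin m → ℝ) → Fin m → ℝ
/-- Two-index field. -/
abbrev Ten (m : ℕ) := (Fin m → ℝ) → Fin m → Fin m → ℝ
/-- Connection coefficients `Γ x c a b = Γ^c_{ab}` (first index upper). -/
abbrev Conn (m : ℕ) := (Fin m → ℝ) → Fin m → Fin m → Fin m → ℝ
/-- Three-index field. -/
abbrev Ten3 (m : ℕ) := (Fin m → ℝ) → Fin m → Fin m → Fin m → ℝ

/-- Partial derivative of `f` in the `a`-th coordinate direction at `x`. -/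
def pd (a : Fin m) (f : Sc m) (x : Fin m → ℝ) : ℝ :=
  fderiv ℝ f x (Pi.single a 1)

/-- Kronecker delta. -/
def kd (a b : Fin m) : ℝ := if a = b then 1 else 0

/-- Equations (EqP1)-(EqP4): `[[P,n],[nᵀ,n2]]` consists of the inverse blocks of
the block matrix `[[γ,ℓ],[ℓᵀ,ℓ2]]`. -/
def InvBlocks (γ : Fin m → Fin m → ℝ) (ℓ : Fin m → ℝ) (ℓ2 : ℝ)
    (P : Fin m → Fin m → ℝ) (n : Fin m → ℝ) (n2 : ℝ) : Prop :=
  (∀ a b, (∑ c, P a c * γ c b) + n a * ℓ b = kd a b) ∧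
  (∀ a, (∑ b, P a b * ℓ b) + ℓ2 * n a = 0) ∧
  ((∑ a, n a * ℓ a) + n2 * ℓ2 = 1) ∧
  (∀ a, (∑ b, γ a b * n b) + n2 * ℓ a = 0)

/-- ∇_a ω_b. -/
def covD1 (Γ : Conn m) (ω : Vec m) (x : Fin m → ℝ) (a b : Fin m) : ℝ :=
  pd a (fun y => ω y b) x - ∑ d, Γ x d a b * ω x d

/-- ∇_a X^b. -/
def covD1U (Γ : Conn m) (X : Vec m) (x : Fin m → ℝ) (a b : Fin m) : ℝ :=
  pd a (fun y => X y b) x + ∑ d, Γ x b a d * X x d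

/-- ∇_a T_{bc}. -/
def covD2 (Γ : Conn m) (T : Ten m) (x : Fin m → ℝ) (a b c : Fin m) : ℝ :=
  pd a (fun y => T y b c) x - (∑ d, Γ x d a b * T x d c) - (∑ d, Γ x d a c * T x b d)

/-- ∇_a T^{bc}. -/
def covD2U (Γ : Conn m) (T : Ten m) (x : Fin m → ℝ) (a b c : Fin m) : ℝ :=
  pd a (fun y => T y b c) x + (∑ d, Γ x b a d * T x d c) + (∑ d, Γ x c a d * T x b d)

/-- ∇_a S^b_c (first index of `S` upper, second lower). -/
def covD11 (Γ : Conn m) (S : Ten m) (x : Fin m → ℝ) (a b c : Fin m) : ℝ :=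
  pd a (fun y => S y b c) x + (∑ d, Γ x b a d * S x d c) - (∑ d, Γ x d a c * S x b d)

/-- ∇_a Q^{bcd}. -/
def covD3U (Γ : Conn m) (Q : Ten3 m) (x : Fin m → ℝ) (a b c d : Fin m) : ℝ :=
  pd a (fun y => Q y b c d) x + (∑ f, Γ x b a f * Q x f c d)
    + (∑ f, Γ x c a f * Q x b f d) + (∑ f, Γ x d a f * Q x b c f)

/-- Curvature `R^a_{bcd} = ∂_cΓ^a_{db} − ∂_dΓ^a_{cb} + Γ^a_{cf}Γ^f_{db} − Γ^a_{df}Γ^f_{cb}`. -/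
def curv (Γ : Conn m) (x : Fin m → ℝ) (a b c d : Fin m) : ℝ :=
  pd c (fun y => Γ y a d b) x - pd d (fun y => Γ y a c b) x
    + (∑ f, Γ x a c f * Γ x f d b) - (∑ f, Γ x a d f * Γ x f c b)

/-- `F_{ab} = ½(∂_aℓ_b − ∂_bℓ_a)`. -/
def Ff (ℓ : Vec m) (x : Fin m → ℝ) (a b : Fin m) : ℝ :=
  (pd a (fun y => ℓ y b) x - pd b (fun y => ℓ y a) x) / 2

/-- `U_{ab} = ½(n^c∂_cγ_{ab} + γ_{cb}∂_an^c + γ_{ac}∂_bn^c + ℓ_a∂_bn⁽²⁾ + ℓ_b∂_an⁽²⁾)`. -/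
def Uf (γ : Ten m) (ℓ : Vec m) (n : Vec m) (n2 : Sc m)
    (x : Fin m → ℝ) (a b : Fin m) : ℝ :=
  ((∑ c, (n x c * pd c (fun y => γ y a b) x + γ x c b * pd a (fun y => n y c) x
      + γ x a c * pd b (fun y => n y c) x))
    + ℓ x a * pd b n2 x + ℓ x b * pd a n2 x) / 2

/-- Metric hypersurface connection `Γ̊^c_{ab}`. -/
def Gam0 (γ : Ten m) (ℓ : Vec m) (P : Ten m) (n : Vec m)
    (x : Fin m → ℝ) (c a b : Fin m) : ℝ :=
  (∑ d, P x c d * (pd a (fun y => γ y b d) x + pd b (fun y => γ y a d) x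
      - pd d (fun y => γ y a b) x)) / 2
  + n x c * (pd a (fun y => ℓ y b) x + pd b (fun y => ℓ y a) x) / 2

/-- The connection `Γ̄^c_{ab} = Γ̊^c_{ab} − n^c Y_{ab}`. -/
def GamB (γ : Ten m) (ℓ : Vec m) (P : Ten m) (n : Vec m) (Y : Ten m)
    (x : Fin m → ℝ) (c a b : Fin m) : ℝ :=
  Gam0 γ ℓ P n x c a b - n x c * Y x a b

/-- `K_{ab} = n⁽²⁾Y_{ab} + U_{ab}`. -/
def Kf (γ : Ten m) (ℓ : Vec m) (n : Vec m) (n2 : Sc m) (Y : Ten m)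
    (x : Fin m → ℝ) (a b : Fin m) : ℝ :=
  n2 x * Y x a b + Uf γ ℓ n n2 x a b

/-- `φ_a = ½n⁽²⁾∂_aℓ⁽²⁾ + n^b(Y_{ab} + F_{ab})`. -/
def phif (ℓ : Vec m) (ℓ2 : Sc m) (n : Vec m) (n2 : Sc m) (Y : Ten m)
    (x : Fin m → ℝ) (a : Fin m) : ℝ :=
  n2 x * pd a ℓ2 x / 2 + ∑ b, n x b * (Y x a b + Ff ℓ x a b)

/-- `Ψ^b_a = P^{bc}(Y_{ac} + F_{ac}) + ½n^b∂_aℓ⁽²⁾`. -/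
def Psif (ℓ : Vec m) (ℓ2 : Sc m) (P : Ten m) (n : Vec m) (Y : Ten m)
    (x : Fin m → ℝ) (b a : Fin m) : ℝ :=
  (∑ c, P x b c * (Y x a c + Ff ℓ x a c)) + n x b * pd a ℓ2 x / 2

/-- Smoothness of a scalar field on `U`. -/
def SmSc (U : Set (Fin m → ℝ)) (f : Sc m) : Prop := ContDiffOn ℝ (⊤ : ℕ∞) f U
/-- Smoothness of a one-index field on `U`. -/
def SmVec (U : Set (Fin m → ℝ)) (f : Vec m) : Prop :=
  ∀ a, ContDiffOn ℝ (⊤ : ℕ∞) (fun x => f x a) U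
/-- Smoothness of a two-index field on `U`. -/
def SmTen (U : Set (Fin m → ℝ)) (f : Ten m) : Prop :=
  ∀ a b, ContDiffOn ℝ (⊤ : ℕ∞) (fun x => f x a b) U

/-- Smooth coordinate hypersurface metric data on `U`. -/
def MetricData (U : Set (Fin m → ℝ)) (γ : Ten m) (ℓ : Vec m) (ℓ2 : Sc m)
    (P : Ten m) (n : Vec m) (n2 : Sc m) : Prop :=
  SmTen U γ ∧ SmVec U ℓ ∧ SmSc U ℓ2 ∧ SmTen U P ∧ SmVec U n ∧ SmSc U n2 ∧
  (∀ x ∈ U, ∀ a b, γ x a b = γ x b a) ∧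
  (∀ x ∈ U, ∀ a b, P x a b = P x b a) ∧
  (∀ x ∈ U, InvBlocks (γ x) (ℓ x) (ℓ2 x) (P x) (n x) (n2 x))

/-- Gauge-transformed `ℓ`. -/
def gaugeL (γ : Ten m) (ℓ : Vec m) (u : Sc m) (V : Vec m) : Vec m :=
  fun x a => u x * (ℓ x a + ∑ b, V x b * γ x a b)

/-- Gauge-transformed `ℓ⁽²⁾`. -/
def gaugeL2 (γ : Ten m) (ℓ : Vec m) (ℓ2 : Sc m) (u : Sc m) (V : Vec m) : Sc m :=
  fun x => u x ^ 2 * (ℓ2 x + 2 * (∑ a, V x a * ℓ x a) + ∑ a, ∑ b, V x a * V x b * γ x a b)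

/-- Gauge-transformed `Y`. -/
def gaugeY (γ : Ten m) (ℓ : Vec m) (Y : Ten m) (u : Sc m) (V : Vec m) : Ten m :=
  fun x a b => u x * Y x a b + (ℓ x a * pd b u x + ℓ x b * pd a u x) / 2
    + ((u x * ∑ c, V x c * pd c (fun y => γ y a b) x)
      + (∑ c, γ x c b * pd a (fun y => u y * V y c) x)
      + (∑ c, γ x a c * pd b (fun y => u y * V y c) x)) / 2

/-- Gauge-transformed `P`. -/
def gaugeP (P : Ten m) (n : Vec m) (n2 : Sc m) (V : Vec m) : Ten m :=
  fun x a b => P x a b + n2 x * V x a * V x b - V x a * n x b - V x b * n x a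

/-- Gauge-transformed `n`. -/
def gaugeN (n : Vec m) (n2 : Sc m) (u : Sc m) (V : Vec m) : Vec m :=
  fun x a => (u x)⁻¹ * (n x a - n2 x * V x a)

/-- Gauge-transformed `n⁽²⁾`. -/
def gaugeN2 (n2 : Sc m) (u : Sc m) : Sc m :=
  fun x => ((u x) ^ 2)⁻¹ * n2 x

/-- Shell energy-momentum tensor `τ^{fa}` built pointwise from the jump `V_{ab}`. -/
def tauP (P : Fin m → Fin m → ℝ) (n : Fin m → ℝ) (n2 : ℝ) (V : Fin m → Fin m → ℝ)
    (f a : Fin m) : ℝ :=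
  (∑ c, ∑ d, (n f * P a c + n a * P f c) * n d * V c d)
  - (∑ c, ∑ d, (n2 * P f c * P a d + P f a * n c * n d) * V c d)
  + (n2 * P f a - n f * n a) * (∑ c, ∑ d, P c d * V c d)

/-- `τ^f_c = −(n⁽²⁾P^{bd} − n^bn^d)(δ^f_dV_{bc} − δ^f_cV_{bd})`. -/
def tauMixP (P : Fin m → Fin m → ℝ) (n : Fin m → ℝ) (n2 : ℝ)
    (V : Fin m → Fin m → ℝ) (f c : Fin m) : ℝ :=
  -(∑ b, ∑ d, (n2 * P b d - n b * n d) * (kd f d * V b c - kd f c * V b d))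

/-- `T^f = (P^{bf}n^c − P^{bc}n^f)V_{bc}`. -/
def tauVecP (P : Fin m → Fin m → ℝ) (n : Fin m → ℝ) (V : Fin m → Fin m → ℝ)
    (f : Fin m) : ℝ :=
  ∑ b, ∑ c, (P b f * n c - P b c * n f) * V b c

/-- The block matrix 𝔸. -/
def blockA (γ : Ten m) (ℓ : Vec m) (ℓ2 : Sc m) (x : Fin m → ℝ) :
    Matrix (Fin m ⊕ Unit) (Fin m ⊕ Unit) ℝ :=
  fun i j =>
    match i, j with
    | Sum.inl a, Sum.inl b => γ x a b
    | Sum.inl a, Sum.inr _ => ℓ x a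
    | Sum.inr _, Sum.inl b => ℓ x b
    | Sum.inr _, Sum.inr _ => ℓ2 x

/-- `det 𝔸` as a scalar field. -/
def detA (γ : Ten m) (ℓ : Vec m) (ℓ2 : Sc m) (x : Fin m → ℝ) : ℝ :=
  (blockA γ ℓ ℓ2 x).det

end HypData

/-!
Write `B = 𝔸⁻¹ = [[P, n], [nᵀ, n⁽²⁾]]`. Differentiating `B 𝔸 = 1` gives
`∂_a B = -B (∂_a 𝔸) B`. Collect `Γ̄^b_{ad}`, `Ψ^b_a`, `-K_{ad}`, `φ_a` into the block matrix
`M_a = [[Γ̄_a, Ψ_a], [-K_a, φ_a]]` (`connMatrix`); the three equations are the blocks of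
`∂_a B + M_a B + (M_a B)ᵀ = 0`. The point is that `M_a = B N_a`, where `N_a` (`loweredConn`) is
built from the Christoffel symbols of the first kind of `γ`, from `∂ℓ`, `∂ℓ⁽²⁾` and `Y`, and
satisfies `N_a + N_aᵀ = ∂_a 𝔸` (the `Y` terms cancel). Hence the left side equals
`B (N_a + N_aᵀ - ∂_a 𝔸) B = 0`. Identifying the block `-K_a` of `B N_a` uses
`U_{ab} = -n^c Γ_{abc} - n⁽²⁾ ∂_{(a}ℓ_{b)}`, which is read off from `𝔸 ∂_a B = -(∂_a 𝔸) B`.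
-/

namespace HypData
open Matrix

variable {m : ℕ} {U : Set (Fin m → ℝ)} {x : Fin m → ℝ} {a : Fin m}

lemma pd_congr (hU : IsOpen U) (hx : x ∈ U) {f g : Sc m} (h : ∀ y ∈ U, f y = g y) :
    pd a f x = pd a g x := by
  rw [pd, pd, Filter.EventuallyEq.fderiv_eq (Filter.eventuallyEq_of_mem (hU.mem_nhds hx) h)]

lemma pd_mul {f g : Sc m} (hf : DifferentiableAt ℝ f x) (hg : DifferentiableAt ℝ g x) :
    pd a (fun y => f y * g y) x = pd a f x * g x + f x * pd a g x := by
  simp only [pd, fderiv_fun_mul hf hg, _root_.add_apply, _root_.smul_apply, smul_eq_mul]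
  ring

lemma pd_sum {ι : Type*} {s : Finset ι} {f : ι → Sc m}
    (hf : ∀ i ∈ s, DifferentiableAt ℝ (f i) x) :
    pd a (fun y => ∑ i ∈ s, f i y) x = ∑ i ∈ s, pd a (f i) x := by
  simp [pd, fderiv_fun_sum hf]

lemma SmSc.differentiableAt {f : Sc m} (hf : SmSc U f) (hU : IsOpen U) (hx : x ∈ U) :
    DifferentiableAt ℝ f x :=
  (hf.differentiableOn (by simp)).differentiableAt (hU.mem_nhds hx)

lemma sum_finSumUnit (f : Fin m ⊕ Unit → ℝ) : ∑ i, f i = ∑ d, f (.inl d) + f (.inr ()) := by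
  simp [Fintype.sum_sum_type]

section MatrixField

variable {ι κ ν : Type*}

def pdMatrix (a : Fin m) (A : (Fin m → ℝ) → Matrix ι κ ℝ) (x : Fin m → ℝ) : Matrix ι κ ℝ :=
  of fun i j => pd a (fun y => A y i j) x

lemma pdMatrix_mul [Fintype κ] {A : (Fin m → ℝ) → Matrix ι κ ℝ} {B : (Fin m → ℝ) → Matrix κ ν ℝ}
    (hA : ∀ i j, DifferentiableAt ℝ (fun y => A y i j) x)
    (hB : ∀ i j, DifferentiableAt ℝ (fun y => B y i j) x) :
    pdMatrix a (fun y => A y * B y) x = pdMatrix a A x * B x + A x * pdMatrix a B x := by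
  ext i j
  change pd a (fun y => ∑ k, A y i k * B y k j) x = _
  rw [Matrix.add_apply, mul_apply, mul_apply,
    pd_sum (f := fun k y => A y i k * B y k j) fun k _ => (hA i k).mul (hB k j),
    ← Finset.sum_add_distrib]
  exact Finset.sum_congr rfl fun k _ => pd_mul (hA i k) (hB k j)

lemma pdMatrix_eq_zero_of_eqOn (hU : IsOpen U) (hx : x ∈ U) {A : (Fin m → ℝ) → Matrix ι κ ℝ}
    {C : Matrix ι κ ℝ} (h : ∀ y ∈ U, A y = C) : pdMatrix a A x = 0 := by
  ext i j
  rw [pdMatrix, of_apply, pd_congr hU hx fun y hy => congrFun (congrFun (h y hy) i) j]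
  simp [pd]

lemma pdMatrix_of_mul_eq_one [Fintype ι] [DecidableEq ι] (hU : IsOpen U) (hx : x ∈ U)
    {A B : (Fin m → ℝ) → Matrix ι ι ℝ}
    (hA : ∀ i j, DifferentiableAt ℝ (fun y => A y i j) x)
    (hB : ∀ i j, DifferentiableAt ℝ (fun y => B y i j) x)
    (hBA : ∀ y ∈ U, B y * A y = 1) :
    pdMatrix a B x = -(B x * pdMatrix a A x * B x) := by
  have hAB : A x * B x = 1 := mul_eq_one_comm.mp (hBA x hx)
  have hd : pdMatrix a B x * A x + B x * pdMatrix a A x = 0 := by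
    rw [← pdMatrix_mul hB hA, pdMatrix_eq_zero_of_eqOn hU hx hBA]
  calc pdMatrix a B x = pdMatrix a B x * A x * B x := by
        rw [Matrix.mul_assoc, hAB, Matrix.mul_one]
    _ = -(B x * pdMatrix a A x * B x) := by rw [eq_neg_of_add_eq_zero_left hd, Matrix.neg_mul]

end MatrixField

section Hypersurface

variable {γ : Ten m} {ℓ : Vec m} {ℓ2 : Sc m} {P : Ten m} {n : Vec m} {n2 : Sc m} {Y : Ten m}

lemma blockA_mul_blockA_eq_one (hγ : ∀ a b, γ x a b = γ x b a)
    (h : InvBlocks (γ x) (ℓ x) (ℓ2 x) (P x) (n x) (n2 x)) :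
    blockA P n n2 x * blockA γ ℓ ℓ2 x = 1 := by
  obtain ⟨hPγ, hPℓ, hnℓ, hγn⟩ := h
  ext (a | _) (b | _)
  · simpa [mul_apply, sum_finSumUnit, blockA, one_apply, kd] using hPγ a b
  · simpa [mul_apply, sum_finSumUnit, blockA, mul_comm] using hPℓ a
  · simpa [mul_apply, sum_finSumUnit, blockA, mul_comm, hγ] using hγn b
  · simpa [mul_apply, sum_finSumUnit, blockA] using hnℓ

lemma blockA_transpose (hP : ∀ a b, P x a b = P x b a) :
    (blockA P n n2 x)ᵀ = blockA P n n2 x := by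
  ext (a | _) (b | _) <;> simp [blockA, hP]

lemma blockA_differentiableAt (hγ : SmTen U γ) (hℓ : SmVec U ℓ) (hℓ2 : SmSc U ℓ2)
    (hU : IsOpen U) (hx : x ∈ U) (i j : Fin m ⊕ Unit) :
    DifferentiableAt ℝ (fun y => blockA γ ℓ ℓ2 y i j) x := by
  rcases i with a | _ <;> rcases j with b | _
  exacts [SmSc.differentiableAt (hγ a b) hU hx, SmSc.differentiableAt (hℓ a) hU hx,
    SmSc.differentiableAt (hℓ b) hU hx, hℓ2.differentiableAt hU hx]

def christoffelFirstKind (γ : Ten m) (x : Fin m → ℝ) (a b c : Fin m) : ℝ :=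
  (pd a (fun y => γ y b c) x + pd b (fun y => γ y a c) x - pd c (fun y => γ y a b) x) / 2

def loweredConn (γ : Ten m) (ℓ : Vec m) (ℓ2 : Sc m) (Y : Ten m) (x : Fin m → ℝ) (a : Fin m) :
    Matrix (Fin m ⊕ Unit) (Fin m ⊕ Unit) ℝ :=
  fromBlocks (of fun c b => christoffelFirstKind γ x a b c) (of fun c _ => Y x a c + Ff ℓ x a c)
    (of fun _ b => (pd a (fun y => ℓ y b) x + pd b (fun y => ℓ y a) x) / 2 - Y x a b)
    (of fun _ _ => pd a ℓ2 x / 2)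

def connMatrix (γ : Ten m) (ℓ : Vec m) (ℓ2 : Sc m) (P : Ten m) (n : Vec m) (n2 : Sc m)
    (Y : Ten m) (x : Fin m → ℝ) (a : Fin m) : Matrix (Fin m ⊕ Unit) (Fin m ⊕ Unit) ℝ :=
  fromBlocks (of fun c b => GamB γ ℓ P n Y x c a b) (of fun c _ => Psif ℓ ℓ2 P n Y x c a)
    (of fun _ b => -Kf γ ℓ n n2 Y x a b) (of fun _ _ => phif ℓ ℓ2 n n2 Y x a)

lemma loweredConn_add_transpose (hU : IsOpen U) (hx : x ∈ U)
    (hγ : ∀ y ∈ U, ∀ a b, γ y a b = γ y b a) :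
    loweredConn γ ℓ ℓ2 Y x a + (loweredConn γ ℓ ℓ2 Y x a)ᵀ = pdMatrix a (blockA γ ℓ ℓ2) x := by
  ext (c | _) (b | _) <;>
    simp only [loweredConn, christoffelFirstKind, Ff, pdMatrix, blockA, Matrix.add_apply,
      transpose_apply, fromBlocks_apply₁₁, fromBlocks_apply₁₂, fromBlocks_apply₂₁,
      fromBlocks_apply₂₂, of_apply]
  · rw [pd_congr hU hx fun y hy => hγ y hy c b]
    ring
  all_goals ring

lemma Uf_eq_neg_christoffelFirstKind (hγ : ∀ a b, γ x a b = γ x b a)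
    (h : ∀ a, blockA γ ℓ ℓ2 x * pdMatrix a (blockA P n n2) x
      = -(pdMatrix a (blockA γ ℓ ℓ2) x * blockA P n n2 x)) (a b : Fin m) :
    Uf γ ℓ n n2 x a b = -(∑ c, n x c * christoffelFirstKind γ x a b c)
      - n2 x * ((pd a (fun y => ℓ y b) x + pd b (fun y => ℓ y a) x) / 2) := by
  have hab := congrFun (congrFun (h a) (.inl b)) (.inr ())
  have hba := congrFun (congrFun (h b) (.inl a)) (.inr ())
  simp only [mul_apply, sum_finSumUnit, blockA, pdMatrix, of_apply, Matrix.neg_apply] at hab hba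
  have hΓ : ∑ c, n x c * christoffelFirstKind γ x a b c
      = ((∑ c, pd a (fun y => γ y b c) x * n x c) + (∑ c, pd b (fun y => γ y a c) x * n x c)
        - ∑ c, n x c * pd c (fun y => γ y a b) x) / 2 := by
    simp only [christoffelFirstKind, ← Finset.sum_add_distrib, ← Finset.sum_sub_distrib,
      Finset.sum_div]
    exact Finset.sum_congr rfl fun c _ => by ring
  simp only [Uf, Finset.sum_add_distrib, hγ _ b]
  rw [hΓ]
  linarith

lemma connMatrix_eq_blockA_mul_loweredConn (hγ : ∀ a b, γ x a b = γ x b a)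
    (h : ∀ a, blockA γ ℓ ℓ2 x * pdMatrix a (blockA P n n2) x
      = -(pdMatrix a (blockA γ ℓ ℓ2) x * blockA P n n2 x)) (a : Fin m) :
    connMatrix γ ℓ ℓ2 P n n2 Y x a = blockA P n n2 x * loweredConn γ ℓ ℓ2 Y x a := by
  ext (c | _) (b | _) <;>
    simp only [connMatrix, loweredConn, blockA, mul_apply, sum_finSumUnit, fromBlocks_apply₁₁,
      fromBlocks_apply₁₂, fromBlocks_apply₂₁, fromBlocks_apply₂₂, of_apply, GamB, Gam0,
      christoffelFirstKind, Finset.sum_div, mul_div_assoc', Psif, Kf,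
      Uf_eq_neg_christoffelFirstKind hγ h, phif] <;>
    ring

lemma connMatrix_equation (hU : IsOpen U) (hdata : MetricData U γ ℓ ℓ2 P n n2) (hx : x ∈ U)
    (a : Fin m) :
    pdMatrix a (blockA P n n2) x + connMatrix γ ℓ ℓ2 P n n2 Y x a * blockA P n n2 x
      + (connMatrix γ ℓ ℓ2 P n n2 Y x a * blockA P n n2 x)ᵀ = 0 := by
  obtain ⟨hγs, hℓs, hℓ2s, hPs, hns, hn2s, hγsym, hPsym, hinv⟩ := hdata
  have hBA : ∀ y ∈ U, blockA P n n2 y * blockA γ ℓ ℓ2 y = 1 :=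
    fun y hy => blockA_mul_blockA_eq_one (hγsym y hy) (hinv y hy)
  have hdB (a : Fin m) := pdMatrix_of_mul_eq_one (a := a) hU hx
    (blockA_differentiableAt hγs hℓs hℓ2s hU hx) (blockA_differentiableAt hPs hns hn2s hU hx) hBA
  have hAB : blockA γ ℓ ℓ2 x * blockA P n n2 x = 1 := mul_eq_one_comm.mp (hBA x hx)
  have hAdB (a : Fin m) : blockA γ ℓ ℓ2 x * pdMatrix a (blockA P n n2) x
      = -(pdMatrix a (blockA γ ℓ ℓ2) x * blockA P n n2 x) := by
    rw [hdB, Matrix.mul_neg, ← Matrix.mul_assoc, ← Matrix.mul_assoc, hAB, Matrix.one_mul]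
  rw [connMatrix_eq_blockA_mul_loweredConn (hγsym x hx) hAdB, hdB,
    ← loweredConn_add_transpose hU hx hγsym (Y := Y), transpose_mul, transpose_mul,
    blockA_transpose (hPsym x hx)]
  noncomm_ring

lemma connMatrix_equation_apply (hU : IsOpen U) (hdata : MetricData U γ ℓ ℓ2 P n n2)
    (hx : x ∈ U) (a : Fin m) (i j : Fin m ⊕ Unit) :
    pd a (fun y => blockA P n n2 y i j) x
      + (∑ k, connMatrix γ ℓ ℓ2 P n n2 Y x a i k * blockA P n n2 x k j)
      + (∑ k, connMatrix γ ℓ ℓ2 P n n2 Y x a j k * blockA P n n2 x k i) = 0 :=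
  congrArg (· i j) (connMatrix_equation hU hdata hx a)

end Hypersurface

end HypData

open HypData in
theorem statement5_general (m : ℕ) (U : Set (Fin m → ℝ)) (hU : IsOpen U)
    (γ : Ten m) (ℓ : Vec m) (ℓ2 : Sc m) (P : Ten m) (n : Vec m) (n2 : Sc m)
    (hdata : MetricData U γ ℓ ℓ2 P n n2)
    (Y : Ten m) :
    (∀ x ∈ U, ∀ a b c,
      covD2U (GamB γ ℓ P n Y) P x a b c
        + n x b * Psif ℓ ℓ2 P n Y x c a + n x c * Psif ℓ ℓ2 P n Y x b a = 0)
    ∧ (∀ x ∈ U, ∀ a b,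
      covD1U (GamB γ ℓ P n Y) n x a b + phif ℓ ℓ2 n n2 Y x a * n x b
        - (∑ c, P x b c * Kf γ ℓ n n2 Y x a c) + n2 x * Psif ℓ ℓ2 P n Y x b a = 0)
    ∧ (∀ x ∈ U, ∀ a,
      -(pd a n2 x) / 2 - n2 x * phif ℓ ℓ2 n n2 Y x a
        + (∑ b, Kf γ ℓ n n2 Y x a b * n x b) = 0) := by
  have hPsym : ∀ x ∈ U, ∀ a b, P x a b = P x b a := hdata.2.2.2.2.2.2.2.1
  have hP (x) (hx : x ∈ U) (b) (f : Fin m → ℝ) : ∑ d, f d * P x d b = ∑ d, f d * P x b d :=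
    Finset.sum_congr rfl fun d _ => by rw [hPsym x hx d b]
  refine ⟨fun x hx a b c => ?_, fun x hx a b => ?_, fun x hx a => ?_⟩
  · have h := connMatrix_equation_apply hU hdata hx a (Y := Y) (.inl b) (.inl c)
    simp only [sum_finSumUnit, connMatrix, blockA, Matrix.fromBlocks_apply₁₁,
      Matrix.fromBlocks_apply₁₂, Matrix.of_apply, hP x hx b] at h
    rw [covD2U]
    linarith
  · have h := connMatrix_equation_apply hU hdata hx a (Y := Y) (.inl b) (.inr ())
    simp only [sum_finSumUnit, connMatrix, blockA, Matrix.fromBlocks_apply₁₁,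
      Matrix.fromBlocks_apply₁₂, Matrix.fromBlocks_apply₂₁, Matrix.fromBlocks_apply₂₂,
      Matrix.of_apply, neg_mul, Finset.sum_neg_distrib, hP x hx b] at h
    simp only [covD1U, mul_comm (P x b _)]
    linarith
  · have h := connMatrix_equation_apply hU hdata hx a (Y := Y) (.inr ()) (.inr ())
    simp only [sum_finSumUnit, connMatrix, blockA, Matrix.fromBlocks_apply₂₁,
      Matrix.fromBlocks_apply₂₂, Matrix.of_apply, neg_mul, Finset.sum_neg_distrib] at h
    linarith

open HypData in
/-- Corollary 2 of the paper, the field equations satisfied by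
`P^{ab}`, `n^a`, `n⁽²⁾` for hypersurface data. -/
theorem statement5 (m : ℕ) (hm : 1 ≤ m) (U : Set (Fin m → ℝ)) (hU : IsOpen U)
    (γ : Ten m) (ℓ : Vec m) (ℓ2 : Sc m) (P : Ten m) (n : Vec m) (n2 : Sc m)
    (hdata : MetricData U γ ℓ ℓ2 P n n2)
    (Y : Ten m) (hYsm : SmTen U Y) (hYs : ∀ x ∈ U, ∀ a b, Y x a b = Y x b a) :
    (∀ x ∈ U, ∀ a b c,
      covD2U (GamB γ ℓ P n Y) P x a b c
        + n x b * Psif ℓ ℓ2 P n Y x c a + n x c * Psif ℓ ℓ2 P n Y x b a = 0)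
    ∧ (∀ x ∈ U, ∀ a b,
      covD1U (GamB γ ℓ P n Y) n x a b + phif ℓ ℓ2 n n2 Y x a * n x b
        - (∑ c, P x b c * Kf γ ℓ n n2 Y x a c) + n2 x * Psif ℓ ℓ2 P n Y x b a = 0)
    ∧ (∀ x ∈ U, ∀ a,
      -(pd a n2 x) / 2 - n2 x * phif ℓ ℓ2 n n2 Y x a
        + (∑ b, Kf γ ℓ n n2 Y x a b * n x b) = 0) :=
  statement5_general m U hU γ ℓ ℓ2 P n n2 hdata Y
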